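/- arXiv:1608.05862 — 5 statements merged into one kernel-verified Lean document; each statement's English description precedes it below -/
import Mathlib

section
/- Let A be an n×n column-stochastic matrix with positive entries and a a positive probability vector with b = Aa. Then the matrix F(A,a) = D(b) − A D(a) Aᵀ is positive semidefinite, has 0 as a simple eigenvalue (with eigenvector 𝟙), and all its other eigenvalues are strictly positive; equivalently, the restriction of F(A,a) to the hyperplane W = {w : 𝟙ᵀw = 0} is positive definite. -/
/-!
The quadratic form of `F = D(A a) - A D(a) Aᵀ` is `wᵀ F w = ∑ⱼ aⱼ Varⱼ(w)`, where `Varⱼ(w)` is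
the variance of `w` under the probability vector given by the `j`-th column of `A`. So `F` is
positive semidefinite, `F 𝟙 = 0`, and `wᵀ F w > 0` as soon as `w` is not constant, which a
nonzero `w` with `∑ wᵢ = 0` is not.
-/

open Matrix

theorem sum_mul_sq_sub_weightedMean {ι : Type*} [Fintype ι] {p : ι → ℝ} (hp : ∑ i, p i = 1)
    (w : ι → ℝ) :
    ∑ i, p i * (w i - ∑ k, p k * w k) ^ 2 = ∑ i, p i * w i ^ 2 - (∑ k, p k * w k) ^ 2 := by
  set m := ∑ k, p k * w k
  calc ∑ i, p i * (w i - m) ^ 2 = ∑ i, (p i * w i ^ 2 - 2 * m * (p i * w i) + m ^ 2 * p i) :=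
        Finset.sum_congr rfl fun i _ => by ring
    _ = ∑ i, p i * w i ^ 2 - m ^ 2 := by
        rw [Finset.sum_add_distrib, Finset.sum_sub_distrib, ← Finset.mul_sum, ← Finset.mul_sum, hp]
        ring

theorem sum_mul_sq_sub_pos {ι : Type*} [Fintype ι] {p : ι → ℝ} (hp : ∀ i, 0 < p i)
    {w : ι → ℝ} {i₁ i₂ : ι} (hw : w i₁ ≠ w i₂) (c : ℝ) :
    0 < ∑ i, p i * (w i - c) ^ 2 := by
  obtain ⟨i, hi⟩ : ∃ i, w i ≠ c := by
    by_contra! h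
    exact hw ((h i₁).trans (h i₂).symm)
  exact Finset.sum_pos' (fun i _ => by have := hp i; positivity)
    ⟨i, Finset.mem_univ _, mul_pos (hp i) (sq_pos_of_ne_zero (sub_ne_zero.mpr hi))⟩

theorem exists_ne_of_sum_eq_zero {ι : Type*} [Fintype ι] {w : ι → ℝ} (hsum : ∑ i, w i = 0)
    (hw : w ≠ 0) : ∃ i₁ i₂, w i₁ ≠ w i₂ := by
  obtain ⟨i₁, hi₁⟩ := Function.ne_iff.mp hw
  by_contra! hconst
  have : Nonempty ι := ⟨i₁⟩
  rw [Finset.sum_congr rfl fun i _ => hconst i i₁, Finset.sum_const, nsmul_eq_mul] at hsum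
  exact hi₁ ((mul_eq_zero.mp hsum).resolve_left (by simp))

section MixtureCovariance

variable {ι : Type*} [Fintype ι] [DecidableEq ι]

/-- For column-stochastic `A`, this is `∑ⱼ aⱼ (D(p) - p pᵀ)` with `p` the `j`-th column of `A`:
the `a`-average of the covariance matrices of the categorical distributions given by the columns. -/
def mixtureCovariance (A : Matrix ι ι ℝ) (a : ι → ℝ) : Matrix ι ι ℝ :=
  diagonal (A *ᵥ a) - A * diagonal a * Aᵀ

theorem isHermitian_mixtureCovariance (A : Matrix ι ι ℝ) (a : ι → ℝ) :
    (mixtureCovariance A a).IsHermitian := by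
  refine (isHermitian_diagonal _).sub ?_
  simpa only [conjTranspose_eq_transpose_of_trivial] using
    isHermitian_mul_mul_conjTranspose A (isHermitian_diagonal a)

theorem diagonal_mulVec_one {R : Type*} [NonAssocSemiring R] (d : ι → R) : diagonal d *ᵥ 1 = d :=
  funext fun i => by simp [mulVec_diagonal]

theorem mixtureCovariance_mulVec_one {A : Matrix ι ι ℝ} (hA : Aᵀ *ᵥ 1 = 1) (a : ι → ℝ) :
    mixtureCovariance A a *ᵥ 1 = 0 := by
  rw [mixtureCovariance, sub_mulVec, ← mulVec_mulVec, hA, ← mulVec_mulVec, diagonal_mulVec_one,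
    diagonal_mulVec_one, sub_self]

theorem dotProduct_mixtureCovariance_mulVec {A : Matrix ι ι ℝ} (hA : Aᵀ *ᵥ 1 = 1) (a w : ι → ℝ) :
    w ⬝ᵥ (mixtureCovariance A a *ᵥ w) =
      ∑ j, a j * ∑ i, A i j * (w i - (Aᵀ *ᵥ w) j) ^ 2 := by
  have hcol (j : ι) : ∑ i, A i j = 1 := by simpa [mulVec, dotProduct] using congrFun hA j
  have hdiag : w ⬝ᵥ (diagonal (A *ᵥ a) *ᵥ w) = ∑ j, a j * ∑ i, A i j * w i ^ 2 := by
    simp only [dotProduct, mulVec_diagonal]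
    simp only [mulVec, dotProduct, Finset.mul_sum, Finset.sum_mul]
    rw [Finset.sum_comm]
    exact Finset.sum_congr rfl fun j _ => Finset.sum_congr rfl fun i _ => by ring
  have hcompressed : w ⬝ᵥ ((A * diagonal a * Aᵀ) *ᵥ w) = ∑ j, a j * (Aᵀ *ᵥ w) j ^ 2 := by
    rw [← mulVec_mulVec, ← mulVec_mulVec, dotProduct_mulVec, ← mulVec_transpose]
    simp only [dotProduct, mulVec_diagonal]
    exact Finset.sum_congr rfl fun j _ => by ring
  rw [mixtureCovariance, sub_mulVec, dotProduct_sub, hdiag, hcompressed, ← Finset.sum_sub_distrib]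
  refine Finset.sum_congr rfl fun j _ => ?_
  rw [show (Aᵀ *ᵥ w) j = ∑ k, A k j * w k from rfl, sum_mul_sq_sub_weightedMean (hcol j)]
  ring

theorem posSemidef_mixtureCovariance {A : Matrix ι ι ℝ} (hA : ∀ i j, 0 ≤ A i j)
    (hstoch : Aᵀ *ᵥ 1 = 1) {a : ι → ℝ} (ha : ∀ i, 0 ≤ a i) :
    (mixtureCovariance A a).PosSemidef := by
  refine .of_dotProduct_mulVec_nonneg (isHermitian_mixtureCovariance A a) fun w => ?_
  rw [star_trivial, dotProduct_mixtureCovariance_mulVec hstoch]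
  exact Finset.sum_nonneg fun j _ => mul_nonneg (ha j) <|
    Finset.sum_nonneg fun i _ => mul_nonneg (hA i j) (sq_nonneg _)

theorem dotProduct_mixtureCovariance_mulVec_pos {A : Matrix ι ι ℝ} (hA : ∀ i j, 0 < A i j)
    (hstoch : Aᵀ *ᵥ 1 = 1) {a : ι → ℝ} (ha : ∀ i, 0 < a i) {w : ι → ℝ} {i₁ i₂ : ι}
    (hw : w i₁ ≠ w i₂) :
    0 < w ⬝ᵥ (mixtureCovariance A a *ᵥ w) := by
  rw [dotProduct_mixtureCovariance_mulVec hstoch]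
  exact Finset.sum_pos (fun j _ => mul_pos (ha j) (sum_mul_sq_sub_pos (hA · j) hw _))
    ⟨i₁, Finset.mem_univ _⟩

end MixtureCovariance

theorem stmt2_general {n : ℕ} (A : Matrix (Fin n) (Fin n) ℝ)
    (hA : ∀ i j, 0 < A i j)
    (hstoch : Aᵀ *ᵥ (fun _ => (1 : ℝ)) = fun _ => (1 : ℝ))
    (a : Fin n → ℝ) (ha : ∀ i, 0 < a i)
    (b : Fin n → ℝ) (hb : b = A *ᵥ a) :
    (Matrix.diagonal b - A * Matrix.diagonal a * Aᵀ).PosSemidef ∧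
    (Matrix.diagonal b - A * Matrix.diagonal a * Aᵀ) *ᵥ (fun _ => (1 : ℝ)) = 0 ∧
    ∀ w : Fin n → ℝ, (∑ i, w i = 0) → w ≠ 0 →
      0 < w ⬝ᵥ ((Matrix.diagonal b - A * Matrix.diagonal a * Aᵀ) *ᵥ w) := by
  subst hb
  refine ⟨posSemidef_mixtureCovariance (fun i j => (hA i j).le) hstoch fun i => (ha i).le,
    mixtureCovariance_mulVec_one hstoch a, fun w hsum hw => ?_⟩
  obtain ⟨i₁, i₂, hne⟩ := exists_ne_of_sum_eq_zero hsum hw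
  exact dotProduct_mixtureCovariance_mulVec_pos hA hstoch ha hne

theorem stmt2 {n : ℕ} (A : Matrix (Fin n) (Fin n) ℝ)
    (hA : ∀ i j, 0 < A i j)
    (hstoch : Aᵀ *ᵥ (fun _ => (1 : ℝ)) = fun _ => (1 : ℝ))
    (a : Fin n → ℝ) (ha : ∀ i, 0 < a i) (ha1 : ∑ i, a i = 1)
    (b : Fin n → ℝ) (hb : b = A *ᵥ a) :
    (Matrix.diagonal b - A * Matrix.diagonal a * Aᵀ).PosSemidef ∧
    (Matrix.diagonal b - A * Matrix.diagonal a * Aᵀ) *ᵥ (fun _ => (1 : ℝ)) = 0 ∧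
    ∀ w : Fin n → ℝ, (∑ i, w i = 0) → w ≠ 0 →
      0 < w ⬝ᵥ ((Matrix.diagonal b - A * Matrix.diagonal a * Aᵀ) *ᵥ w) :=
  stmt2_general A hA hstoch a ha b hb
end

section
/- If A is a fully indecomposable nonnegative n×n matrix (meaning PAQ is irreducible for every pair of permutation matrices P, Q), then A Aᵀ is irreducible. -/
open Matrix

/-- A square matrix is irreducible if for every nontrivial proper subset `S` of indices
there is a nonzero entry from `S` to its complement. -/
def MatrixIrreducible {n : ℕ} (M : Matrix (Fin n) (Fin n) ℝ) : Prop :=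
  ∀ S : Finset (Fin n), S.Nonempty → S ≠ Finset.univ → ∃ i ∈ S, ∃ j ∉ S, M i j ≠ 0

/-- A nonnegative square matrix is fully indecomposable if every row/column permutation
of it (i.e. every `P * A * Q` with `P`, `Q` permutation matrices) is irreducible. -/
def FullyIndecomposable {n : ℕ} (A : Matrix (Fin n) (Fin n) ℝ) : Prop :=
  ∀ σ τ : Equiv.Perm (Fin n), MatrixIrreducible (A.submatrix σ τ)

/-!
If rows `S` of `A * Aᵀ` have only zero entries in the columns outside `S`, let `T` be the set
of columns meeting the rows in `S`. By nonnegativity the rows outside `S` avoid `T`, so `A`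
has the zero blocks `S × Tᶜ` and `Sᶜ × T`. Full indecomposability forbids a zero block
`S × Tᶜ` with `|T| ≤ |S|` (permute the columns so that `Sᶜ` lands in `Tᶜ`), so `|S| < |T|`
and likewise `|Sᶜ| < |Tᶜ|`, a contradiction.
-/

lemma Finset.exists_perm_mapsTo_of_card_le {α : Type*} [Fintype α] [DecidableEq α]
    {U V : Finset α} (h : U.card ≤ V.card) :
    ∃ τ : Equiv.Perm α, ∀ x ∈ U, τ x ∈ V := by
  obtain ⟨W, hWV, hW⟩ := Finset.exists_subset_card_eq h
  let e : {x // x ∈ U} ≃ {x // x ∈ W} := Finset.equivOfCardEq hW.symm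
  exact ⟨e.extendSubtype, fun x hx => hWV (e.extendSubtype_mem x hx)⟩

lemma Matrix.mul_transpose_apply_eq_zero_iff_of_nonneg {m l R : Type*} [Fintype l]
    [Semiring R] [PartialOrder R] [IsOrderedRing R] {A : Matrix m l R} (hA : ∀ i k, 0 ≤ A i k)
    (i j : m) : (A * Aᵀ) i j = 0 ↔ ∀ k, A i k * A j k = 0 := by
  simp only [mul_apply, transpose_apply]
  simpa using Finset.sum_eq_zero_iff_of_nonneg (s := Finset.univ)
    fun k _ => mul_nonneg (hA i k) (hA j k)

lemma FullyIndecomposable.card_lt_card_of_support_subset {n : ℕ}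
    {A : Matrix (Fin n) (Fin n) ℝ} (hA : FullyIndecomposable A) {S T : Finset (Fin n)}
    (hS : S.Nonempty) (hSu : S ≠ .univ) (hsupp : ∀ i ∈ S, ∀ k ∉ T, A i k = 0) :
    S.card < T.card := by
  by_contra! hTS
  have hcard : Sᶜ.card ≤ Tᶜ.card := by
    rw [Finset.card_compl, Finset.card_compl]
    omega
  obtain ⟨τ, hτ⟩ := Finset.exists_perm_mapsTo_of_card_le hcard
  obtain ⟨i, hi, j, hj, hij⟩ := hA 1 τ S hS hSu
  exact hij (hsupp i hi (τ j) (Finset.mem_compl.mp (hτ j (Finset.mem_compl.mpr hj))))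

theorem stmt6 {n : ℕ} (A : Matrix (Fin n) (Fin n) ℝ)
    (hA : ∀ i j, 0 ≤ A i j)
    (hfi : FullyIndecomposable A) :
    MatrixIrreducible (A * Aᵀ) := by
  classical
  intro S hS hSu
  by_contra! hcut
  let T := Finset.univ.filter fun k => ∃ i ∈ S, A i k ≠ 0
  have hST : ∀ i ∈ S, ∀ k ∉ T, A i k = 0 := fun i hi k hk => by
    by_contra h
    exact hk (Finset.mem_filter.mpr ⟨Finset.mem_univ k, i, hi, h⟩)
  have hScTc : ∀ j ∈ Sᶜ, ∀ k ∉ Tᶜ, A j k = 0 := fun j hj k hk => by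
    obtain ⟨-, i, hi, hik⟩ := Finset.mem_filter.mp (Finset.notMem_compl.mp hk)
    have := (mul_transpose_apply_eq_zero_iff_of_nonneg hA i j).mp
      (hcut i hi j (Finset.mem_compl.mp hj)) k
    exact (mul_eq_zero.mp this).resolve_left hik
  have hlt := hfi.card_lt_card_of_support_subset hS hSu hST
  have hlt' := hfi.card_lt_card_of_support_subset
    (Finset.nonempty_iff_ne_empty.mpr (by simpa using hSu))
    ((Finset.compl_ne_univ_iff_nonempty S).mpr hS) hScTc
  rw [Finset.card_compl, Finset.card_compl] at hlt'
  have := T.card_le_univ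
  omega
end

section
/- Let α ∈ H_{n,++} (positive definite Hermitian of trace 1) and X positive definite Hermitian with a ≤ λ_n(X), λ₁(X) ≤ b where 0 < a ≤ b. Define D_α(X) = (tr(X⁻¹α))⁻¹ · X^{-1/2} α X^{-1/2}. Then D_α(X) is positive definite of trace 1, and its eigenvalues satisfy λ_n(D_α(X)) ≥ a λ_n(α)/(a λ_n(α) + (n−1) b λ₁(α)) and λ₁(D_α(X)) ≤ b λ₁(α)/(b λ₁(α) + (n−1) a λ_n(α)). -/
open Matrix
open scoped ComplexOrder

/-- The largest eigenvalue of a Hermitian matrix. -/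
noncomputable def maxEig {n : ℕ} {M : Matrix (Fin n) (Fin n) ℂ} (hM : M.IsHermitian) : ℝ :=
  ⨆ i, hM.eigenvalues i

/-- The smallest eigenvalue of a Hermitian matrix. -/
noncomputable def minEig {n : ℕ} {M : Matrix (Fin n) (Fin n) ℂ} (hM : M.IsHermitian) : ℝ :=
  ⨅ i, hM.eigenvalues i

/-! With `T = X^{-1/2}`, the matrix `M = T α T` satisfies `(λₙ(α) / b) I ≤ M ≤ (λ₁(α) / a) I` in the
Loewner order: conjugating `λₙ(α) I ≤ α ≤ λ₁(α) I` by `T` gives `λₙ(α) X⁻¹ ≤ M ≤ λ₁(α) X⁻¹`, and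
conjugating `a I ≤ X ≤ b I` gives `b⁻¹ I ≤ X⁻¹ ≤ a⁻¹ I`. Since `tr (X⁻¹ α) = tr M`, we have
`D_α(X) = M / tr M`, and for each eigenvalue `μ` of `M` the trace lies between
`μ + (n - 1) λₙ(α) / b` and `μ + (n - 1) λ₁(α) / a`. -/

open scoped MatrixOrder

section StarOrderedAlgebra

variable {R : Type*} [Ring R] [StarRing R] [PartialOrder R] [StarOrderedRing R] [Algebra ℝ R]
  [PosSMulMono ℝ R] {T X Y : R}

lemma IsSelfAdjoint.div_smul_one_le_conjugate (hT : IsSelfAdjoint T) (hTX : T * X * T = 1)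
    {b p : ℝ} (hb : 0 < b) (hXb : X ≤ b • 1) (hp : 0 ≤ p) (hpY : p • 1 ≤ Y) :
    (p / b) • 1 ≤ T * Y * T := by
  have hTT : 1 ≤ b • (T * T) := by
    simpa [hTX, mul_smul_comm, smul_mul_assoc] using hT.conjugate_le_conjugate hXb
  calc (p / b) • (1 : R)
      ≤ (p / b) • (b • (T * T)) := smul_le_smul_of_nonneg_left hTT (by positivity)
    _ = T * (p • 1) * T := by rw [smul_smul, div_mul_cancel₀ p hb.ne', mul_smul_comm, mul_one,
        smul_mul_assoc]
    _ ≤ T * Y * T := hT.conjugate_le_conjugate hpY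

lemma IsSelfAdjoint.conjugate_le_div_smul_one (hT : IsSelfAdjoint T) (hTX : T * X * T = 1)
    {a q : ℝ} (ha : 0 < a) (haX : a • 1 ≤ X) (hq : 0 ≤ q) (hYq : Y ≤ q • 1) :
    T * Y * T ≤ (q / a) • 1 := by
  have hTT : a • (T * T) ≤ 1 := by
    simpa [hTX, mul_smul_comm, smul_mul_assoc] using hT.conjugate_le_conjugate haX
  calc T * Y * T ≤ T * (q • 1) * T := hT.conjugate_le_conjugate hYq
    _ = (q / a) • (a • (T * T)) := by rw [smul_smul, div_mul_cancel₀ q ha.ne', mul_smul_comm,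
        mul_one, smul_mul_assoc]
    _ ≤ (q / a) • (1 : R) := smul_le_smul_of_nonneg_left hTT (by positivity)

end StarOrderedAlgebra

section Normalization

variable {ι : Type*} [Fintype ι] {μ : ι → ℝ} {L U : ℝ}

lemma sum_le_add_card_sub_one_mul (hμU : ∀ j, μ j ≤ U) (i : ι) :
    ∑ j, μ j ≤ μ i + (Fintype.card ι - 1) * U := by
  have h := Finset.single_le_sum (fun j _ ↦ sub_nonneg.2 (hμU j)) (Finset.mem_univ i)
  simp only [Finset.sum_sub_distrib, Finset.sum_const, Finset.card_univ, nsmul_eq_mul] at h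
  linarith

lemma add_card_sub_one_mul_le_sum (hLμ : ∀ j, L ≤ μ j) (i : ι) :
    μ i + (Fintype.card ι - 1) * L ≤ ∑ j, μ j := by
  have h := Finset.single_le_sum (fun j _ ↦ sub_nonneg.2 (hLμ j)) (Finset.mem_univ i)
  simp only [Finset.sum_sub_distrib, Finset.sum_const, Finset.card_univ, nsmul_eq_mul] at h
  linarith

lemma div_add_card_sub_one_mul_mul_sum_le (hL : 0 < L) (hLμ : ∀ j, L ≤ μ j) (hμU : ∀ j, μ j ≤ U)
    (i : ι) : L / (L + (Fintype.card ι - 1) * U) * ∑ j, μ j ≤ μ i := by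
  have hk : 0 ≤ (Fintype.card ι : ℝ) - 1 :=
    sub_nonneg.2 (Nat.one_le_cast.2 (Fintype.card_pos_iff.2 ⟨i⟩))
  have hU : 0 ≤ U := hL.le.trans ((hLμ i).trans (hμU i))
  have hden : 0 < L + (Fintype.card ι - 1) * U := by positivity
  calc L / (L + (Fintype.card ι - 1) * U) * ∑ j, μ j
      ≤ L / (L + (Fintype.card ι - 1) * U) * (μ i + (Fintype.card ι - 1) * U) := by
        gcongr
        exact sum_le_add_card_sub_one_mul hμU i
    _ ≤ μ i := by
        rw [div_mul_eq_mul_div, div_le_iff₀ hden]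
        nlinarith [mul_nonneg (mul_nonneg hk hU) (sub_nonneg.2 (hLμ i))]

lemma le_div_add_card_sub_one_mul_mul_sum (hL : 0 < L) (hLμ : ∀ j, L ≤ μ j) (hμU : ∀ j, μ j ≤ U)
    (i : ι) : μ i ≤ U / (U + (Fintype.card ι - 1) * L) * ∑ j, μ j := by
  have hk : 0 ≤ (Fintype.card ι : ℝ) - 1 :=
    sub_nonneg.2 (Nat.one_le_cast.2 (Fintype.card_pos_iff.2 ⟨i⟩))
  have hU : 0 < U := hL.trans_le ((hLμ i).trans (hμU i))
  have hden : 0 < U + (Fintype.card ι - 1) * L := by positivity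
  calc μ i ≤ U / (U + (Fintype.card ι - 1) * L) * (μ i + (Fintype.card ι - 1) * L) := by
        rw [div_mul_eq_mul_div, le_div_iff₀ hden]
        nlinarith [mul_nonneg (mul_nonneg hk hL.le) (sub_nonneg.2 (hμU i))]
    _ ≤ U / (U + (Fintype.card ι - 1) * L) * ∑ j, μ j := by
        gcongr
        exact add_card_sub_one_mul_le_sum hLμ i

end Normalization

namespace Matrix

variable {𝕜 n : Type*} [RCLike 𝕜] [DecidableEq n] {A : Matrix n n 𝕜}

lemma posDef_of_smul_one_le {r : ℝ} (hr : 0 < r) (h : r • (1 : Matrix n n 𝕜) ≤ A) : A.PosDef := by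
  have hr1 : (r • (1 : Matrix n n 𝕜)).PosDef := PosDef.one.smul hr
  simpa using hr1.add_posSemidef (le_iff.mp h)

variable [Fintype n]

lemma IsHermitian.smul_one_le_iff (hA : A.IsHermitian) {r : ℝ} :
    r • (1 : Matrix n n 𝕜) ≤ A ↔ ∀ i, r ≤ hA.eigenvalues i := by
  rw [← Algebra.algebraMap_eq_smul_one, algebraMap_le_iff_le_spectrum hA.isSelfAdjoint,
    hA.spectrum_real_eq_range_eigenvalues, Set.forall_mem_range]

lemma IsHermitian.le_smul_one_iff (hA : A.IsHermitian) {r : ℝ} :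
    A ≤ r • (1 : Matrix n n 𝕜) ↔ ∀ i, hA.eigenvalues i ≤ r := by
  rw [← Algebra.algebraMap_eq_smul_one, le_algebraMap_iff_spectrum_le hA.isSelfAdjoint,
    hA.spectrum_real_eq_range_eigenvalues, Set.forall_mem_range]

lemma IsHermitian.trace_eq_ofReal_sum (hA : A.IsHermitian) :
    A.trace = ((∑ i, hA.eigenvalues i : ℝ) : 𝕜) := by
  rw [hA.trace_eq_sum_eigenvalues, RCLike.ofReal_sum]

lemma PosDef.inv_sqrt_mul_mul_inv_sqrt (hA : A.PosDef) :
    (CFC.sqrt A)⁻¹ * A * (CFC.sqrt A)⁻¹ = 1 := by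
  have hS : IsUnit (CFC.sqrt A).det :=
    (isUnit_iff_isUnit_det _).mp ((CFC.isUnit_sqrt_iff A).mpr hA.isUnit)
  nth_rw 2 [← CFC.sqrt_mul_sqrt_self A]
  rw [← mul_assoc, nonsing_inv_mul _ hS, one_mul, mul_nonsing_inv _ hS]

lemma PosDef.inv_sqrt_mul_self (hA : A.PosDef) :
    (CFC.sqrt A)⁻¹ * (CFC.sqrt A)⁻¹ = A⁻¹ := by
  rw [← mul_inv_rev, CFC.sqrt_mul_sqrt_self A hA.posSemidef.nonneg]

lemma isSelfAdjoint_inv_sqrt (A : Matrix n n 𝕜) : IsSelfAdjoint (CFC.sqrt A)⁻¹ :=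
  (CFC.sqrt_nonneg A).isSelfAdjoint.isHermitian.inv

lemma PosDef.cfc_sqrt_eq (hA : A.PosDef) : hA.1.cfc Real.sqrt = CFC.sqrt A := by
  rw [← hA.1.cfc_eq, CFC.sqrt_eq_real_sqrt A hA.posSemidef.nonneg, cfcₙ_eq_cfc]

lemma IsHermitian.sum_eigenvalues_pos_of_smul_one_le [Nonempty n] (hA : A.IsHermitian) {L : ℝ}
    (hL : 0 < L) (hLA : L • 1 ≤ A) : 0 < ∑ i, hA.eigenvalues i :=
  Finset.sum_pos (fun i _ ↦ hL.trans_le (hA.smul_one_le_iff.1 hLA i)) Finset.univ_nonempty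

lemma IsHermitian.smul_one_le_inv_trace_smul [Nonempty n] (hA : A.IsHermitian) {L U : ℝ}
    (hL : 0 < L) (hLA : L • 1 ≤ A) (hAU : A ≤ U • 1) :
    (L / (L + (Fintype.card n - 1) * U)) • (1 : Matrix n n 𝕜) ≤ A.trace⁻¹ • A := by
  set t := ∑ i, hA.eigenvalues i
  have ht : 0 < t := hA.sum_eigenvalues_pos_of_smul_one_le hL hLA
  have h : (L / (L + (Fintype.card n - 1) * U) * t) • (1 : Matrix n n 𝕜) ≤ A :=
    hA.smul_one_le_iff.2 fun i ↦ div_add_card_sub_one_mul_mul_sum_le hL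
      (hA.smul_one_le_iff.1 hLA) (hA.le_smul_one_iff.1 hAU) i
  rw [hA.trace_eq_ofReal_sum, ← RCLike.ofReal_inv, ← RCLike.real_smul_eq_coe_smul]
  convert smul_le_smul_of_nonneg_left h (inv_nonneg.2 ht.le) using 1
  rw [smul_smul, mul_comm _ t, inv_mul_cancel_left₀ ht.ne']

lemma IsHermitian.inv_trace_smul_le_smul_one [Nonempty n] (hA : A.IsHermitian) {L U : ℝ}
    (hL : 0 < L) (hLA : L • 1 ≤ A) (hAU : A ≤ U • 1) :
    A.trace⁻¹ • A ≤ (U / (U + (Fintype.card n - 1) * L)) • (1 : Matrix n n 𝕜) := by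
  set t := ∑ i, hA.eigenvalues i
  have ht : 0 < t := hA.sum_eigenvalues_pos_of_smul_one_le hL hLA
  have h : A ≤ (U / (U + (Fintype.card n - 1) * L) * t) • (1 : Matrix n n 𝕜) :=
    hA.le_smul_one_iff.2 fun i ↦ le_div_add_card_sub_one_mul_mul_sum hL
      (hA.smul_one_le_iff.1 hLA) (hA.le_smul_one_iff.1 hAU) i
  rw [hA.trace_eq_ofReal_sum, ← RCLike.ofReal_inv, ← RCLike.real_smul_eq_coe_smul]
  convert smul_le_smul_of_nonneg_left h (inv_nonneg.2 ht.le) using 1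
  rw [smul_smul, mul_comm _ t, inv_mul_cancel_left₀ ht.ne']

end Matrix

section ExtremeEigenvalues

variable {m : ℕ} {M : Matrix (Fin m) (Fin m) ℂ}

lemma minEig_le (hM : M.IsHermitian) (i : Fin m) : minEig hM ≤ hM.eigenvalues i :=
  ciInf_le (Finite.bddBelow_range _) i

lemma le_maxEig (hM : M.IsHermitian) (i : Fin m) : hM.eigenvalues i ≤ maxEig hM :=
  le_ciSup (Finite.bddAbove_range _) i

lemma le_minEig_iff [Nonempty (Fin m)] (hM : M.IsHermitian) {r : ℝ} :
    r ≤ minEig hM ↔ r • 1 ≤ M := by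
  rw [hM.smul_one_le_iff, minEig, le_ciInf_iff (Finite.bddBelow_range _)]

lemma maxEig_le_iff [Nonempty (Fin m)] (hM : M.IsHermitian) {r : ℝ} :
    maxEig hM ≤ r ↔ M ≤ r • 1 := by
  rw [hM.le_smul_one_iff, maxEig, ciSup_le_iff (Finite.bddAbove_range _)]

lemma Matrix.PosDef.minEig_pos [Nonempty (Fin m)] (hM : M.PosDef) : 0 < minEig hM.1 := by
  obtain ⟨i, hi⟩ := exists_eq_ciInf_of_finite (f := hM.1.eigenvalues)
  rw [minEig, ← hi]
  exact hM.eigenvalues_pos i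

end ExtremeEigenvalues

theorem stmt9_general {n : ℕ} (α X : Matrix (Fin n) (Fin n) ℂ)
    (hα : α.PosDef) (hατ : α.trace = 1)
    (hX : X.PosDef) (a b : ℝ) (ha : 0 < a)
    (hXa : ∀ i, a ≤ hX.1.eigenvalues i) (hXb : ∀ i, hX.1.eigenvalues i ≤ b)
    (D : Matrix (Fin n) (Fin n) ℂ)
    (hD : D = ((X⁻¹ * α).trace)⁻¹ • ((hX.posSemidef.1.eigenvectorUnitary.1 * diagonal (((↑) : ℝ → ℂ) ∘ Real.sqrt ∘ hX.posSemidef.1.eigenvalues) * (star hX.posSemidef.1.eigenvectorUnitary : Matrix (Fin n) (Fin n) ℂ))⁻¹ * α * (hX.posSemidef.1.eigenvectorUnitary.1 * diagonal (((↑) : ℝ → ℂ) ∘ Real.sqrt ∘ hX.posSemidef.1.eigenvalues) * (star hX.posSemidef.1.eigenvectorUnitary : Matrix (Fin n) (Fin n) ℂ))⁻¹))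
    (hDh : D.IsHermitian) :
    D.PosDef ∧ D.trace = 1 ∧
    a * minEig hα.1 / (a * minEig hα.1 + (n - 1) * b * maxEig hα.1) ≤ minEig hDh ∧
    maxEig hDh ≤ b * maxEig hα.1 / (b * maxEig hα.1 + (n - 1) * a * minEig hα.1) := by
  have : Nonempty (Fin n) := not_isEmpty_iff.1 fun _ ↦ by simp [Matrix.trace] at hατ
  let i₀ : Fin n := Classical.arbitrary _
  have hb : 0 < b := ha.trans_le ((hXa i₀).trans (hXb i₀))
  have hp := hα.minEig_pos
  have hq : 0 < maxEig hα.1 := hp.trans_le ((minEig_le hα.1 i₀).trans (le_maxEig hα.1 i₀))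
  set T := (CFC.sqrt X)⁻¹
  set M := T * α * T
  have hT : IsSelfAdjoint T := isSelfAdjoint_inv_sqrt X
  have hTX : T * X * T = 1 := hX.inv_sqrt_mul_mul_inv_sqrt
  have hM : M.IsHermitian := hα.1.isSelfAdjoint.conjugate_self hT
  have hLM : (minEig hα.1 / b) • 1 ≤ M := hT.div_smul_one_le_conjugate hTX hb
    (hX.1.le_smul_one_iff.2 hXb) hp.le ((le_minEig_iff hα.1).1 le_rfl)
  have hMU : M ≤ (maxEig hα.1 / a) • 1 := hT.conjugate_le_div_smul_one hTX ha
    (hX.1.smul_one_le_iff.2 hXa) hq.le ((maxEig_le_iff hα.1).1 le_rfl)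
  have hMpd : M.PosDef := posDef_of_smul_one_le (div_pos hp hb) hLM
  have hDM : D = M.trace⁻¹ • M := by
    change D = _ • ((hX.1.cfc Real.sqrt)⁻¹ * α * (hX.1.cfc Real.sqrt)⁻¹) at hD
    rw [hD, hX.cfc_sqrt_eq, ← hX.inv_sqrt_mul_self, Matrix.mul_assoc, trace_mul_comm]
  refine ⟨?_, ?_, ?_, ?_⟩
  · exact hDM ▸ hMpd.smul (inv_pos.2 hMpd.trace_pos)
  · rw [hDM, trace_smul, smul_eq_mul, inv_mul_cancel₀ hMpd.trace_pos.ne']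
  · rw [le_minEig_iff, hDM]
    convert hM.smul_one_le_inv_trace_smul (div_pos hp hb) hLM hMU using 2
    simp only [Fintype.card_fin]
    field_simp
  · rw [maxEig_le_iff, hDM]
    convert hM.inv_trace_smul_le_smul_one (div_pos hp hb) hLM hMU using 2
    simp only [Fintype.card_fin]
    field_simp

theorem stmt9 {n : ℕ} (α X : Matrix (Fin n) (Fin n) ℂ)
    (hα : α.PosDef) (hατ : α.trace = 1)
    (hX : X.PosDef) (a b : ℝ) (ha : 0 < a) (hab : a ≤ b)
    (hXa : ∀ i, a ≤ hX.1.eigenvalues i) (hXb : ∀ i, hX.1.eigenvalues i ≤ b)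
    (D : Matrix (Fin n) (Fin n) ℂ)
    (hD : D = ((X⁻¹ * α).trace)⁻¹ • ((hX.posSemidef.1.eigenvectorUnitary.1 * diagonal (((↑) : ℝ → ℂ) ∘ Real.sqrt ∘ hX.posSemidef.1.eigenvalues) * (star hX.posSemidef.1.eigenvectorUnitary : Matrix (Fin n) (Fin n) ℂ))⁻¹ * α * (hX.posSemidef.1.eigenvectorUnitary.1 * diagonal (((↑) : ℝ → ℂ) ∘ Real.sqrt ∘ hX.posSemidef.1.eigenvalues) * (star hX.posSemidef.1.eigenvectorUnitary : Matrix (Fin n) (Fin n) ℂ))⁻¹))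
    (hDh : D.IsHermitian) :
    D.PosDef ∧ D.trace = 1 ∧
    a * minEig hα.1 / (a * minEig hα.1 + (n - 1) * b * maxEig hα.1) ≤ minEig hDh ∧
    maxEig hDh ≤ b * maxEig hα.1 / (b * maxEig hα.1 + (n - 1) * a * minEig hα.1) :=
  stmt9_general α X hα hατ hX a b ha hXa hXb D hD hDh
end

section
/- Let Q(X) = ∑ᵢ Aᵢ X Aᵢ* be a completely positive map. Define a(Q) = min over density matrices X (positive semidefinite Hermitian of trace 1) of λ_n(Q(X)), and b(Q) = max over density matrices X of λ₁(Q(X)). Then a(Q) = a(Q') and b(Q) = b(Q') where Q'(X) = ∑ᵢ Aᵢ* X Aᵢ. In particular, Q maps all density matrices to positive definite matrices if and only if Q' does. -/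
/-!
The adjoint map `Q'(Y) = ∑ Aᵢᴴ Y Aᵢ` is the trace dual of `Q`: `tr (Q(X) Y) = tr (X Q'(Y))`.
If `v` is a unit eigenvector of `Q(X)` with eigenvalue `λ`, then for the pure state `Y = v vᴴ`
we get `λ = tr (Q(X) Y) = tr (X Q'(Y))`, and since `X` is a density matrix this lies between the
smallest and the largest eigenvalue of `Q'(Y)`. Hence each value of `λₙ(Q(X))` is bounded below,
and each value of `λ₁(Q(X))` above, by the corresponding value for `Q'`; as `Q'' = Q`, the
extremal values coincide. If all `Q'(Y)` are positive definite, the same identity gives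
`λ = tr (X Q'(Y)) > 0`.
-/

open Matrix
open scoped ComplexOrder

/-- `a(Q)` for the completely positive map `Q(X) = ∑ i, A i * X * (A i)ᴴ`:
the infimum over density matrices `X` of the smallest eigenvalue of `Q(X)`. -/
noncomputable def aQ {n k : ℕ} (A : Fin k → Matrix (Fin n) (Fin n) ℂ) : ℝ :=
  sInf {r : ℝ | ∃ X : Matrix (Fin n) (Fin n) ℂ, X.PosSemidef ∧ X.trace = 1 ∧
    ∃ h : (∑ i, A i * X * (A i)ᴴ).IsHermitian, r = ⨅ j, h.eigenvalues j}

/-- `b(Q)`: the supremum over density matrices `X` of the largest eigenvalue of `Q(X)`. -/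
noncomputable def bQ {n k : ℕ} (A : Fin k → Matrix (Fin n) (Fin n) ℂ) : ℝ :=
  sSup {r : ℝ | ∃ X : Matrix (Fin n) (Fin n) ℂ, X.PosSemidef ∧ X.trace = 1 ∧
    ∃ h : (∑ i, A i * X * (A i)ᴴ).IsHermitian, r = ⨆ j, h.eigenvalues j}

namespace Matrix

variable {𝕜 ι κ : Type*} [RCLike 𝕜] [Fintype ι] [Fintype κ]

section Trace

lemma trace_vecMulVec_self_star_mul (v : ι → 𝕜) (M : Matrix ι ι 𝕜) :
    (vecMulVec v (star v) * M).trace = star v ⬝ᵥ (M *ᵥ v) := by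
  rw [vecMulVec_mul, trace_vecMulVec, dotProduct_comm, dotProduct_mulVec]

lemma trace_vecMulVec_self_star_eq_one {v : EuclideanSpace 𝕜 ι} (hv : ‖v‖ = 1) :
    (vecMulVec v.ofLp (star v.ofLp)).trace = 1 := by
  rw [trace_vecMulVec, ← EuclideanSpace.inner_eq_star_dotProduct, inner_self_eq_norm_sq_to_K, hv]
  simp

lemma nonempty_of_trace_eq_one {X : Matrix ι ι 𝕜} (htr : X.trace = 1) : Nonempty ι := by
  by_contra h
  rw [not_nonempty_iff] at h
  exact one_ne_zero (htr.symm.trans (trace_eq_zero_of_isEmpty X))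

lemma PosSemidef.trace_mul_nonneg {X P : Matrix ι ι 𝕜} (hX : X.PosSemidef) (hP : P.PosSemidef) :
    0 ≤ (X * P).trace := by
  obtain ⟨m, v, rfl⟩ := posSemidef_iff_eq_sum_vecMulVec.mp hX
  rw [Finset.sum_mul, trace_sum]
  exact Finset.sum_nonneg fun i _ => by
    rw [trace_vecMulVec_self_star_mul]; exact hP.dotProduct_mulVec_nonneg _

variable [DecidableEq ι]

lemma trace_mul_algebraMap {X : Matrix ι ι 𝕜} (htr : X.trace = 1) (c : ℝ) :
    (X * algebraMap ℝ (Matrix ι ι 𝕜) c).trace = c := by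
  rw [Algebra.algebraMap_eq_smul_one, mul_smul_comm, mul_one, trace_smul, htr,
    RCLike.real_smul_eq_coe_mul, mul_one]

open scoped MatrixOrder in
lemma IsHermitian.iInf_eigenvalues_le_trace_mul {M X : Matrix ι ι 𝕜} (hM : M.IsHermitian)
    (hX : X.PosSemidef) (htr : X.trace = 1) :
    ((⨅ j, hM.eigenvalues j : ℝ) : 𝕜) ≤ (X * M).trace := by
  have hcM : algebraMap ℝ (Matrix ι ι 𝕜) (⨅ j, hM.eigenvalues j) ≤ M := by
    rw [algebraMap_le_iff_le_spectrum hM.isSelfAdjoint, hM.spectrum_real_eq_range_eigenvalues]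
    rintro _ ⟨j, rfl⟩
    exact ciInf_le (Finite.bddBelow_range _) j
  have := hX.trace_mul_nonneg (le_iff.mp hcM)
  rwa [mul_sub, trace_sub, trace_mul_algebraMap htr, sub_nonneg] at this

open scoped MatrixOrder in
lemma IsHermitian.trace_mul_le_iSup_eigenvalues {M X : Matrix ι ι 𝕜} (hM : M.IsHermitian)
    (hX : X.PosSemidef) (htr : X.trace = 1) :
    (X * M).trace ≤ ((⨆ j, hM.eigenvalues j : ℝ) : 𝕜) := by
  have hcM : M ≤ algebraMap ℝ (Matrix ι ι 𝕜) (⨆ j, hM.eigenvalues j) := by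
    rw [le_algebraMap_iff_spectrum_le hM.isSelfAdjoint, hM.spectrum_real_eq_range_eigenvalues]
    rintro _ ⟨j, rfl⟩
    exact le_ciSup (Finite.bddAbove_range _) j
  have := hX.trace_mul_nonneg (le_iff.mp hcM)
  rwa [mul_sub, trace_sub, trace_mul_algebraMap htr, sub_nonneg] at this

lemma PosDef.trace_mul_pos {M X : Matrix ι ι 𝕜} (hM : M.PosDef) (hX : X.PosSemidef)
    (htr : X.trace = 1) : 0 < (X * M).trace := by
  have := nonempty_of_trace_eq_one htr
  obtain ⟨j, hj⟩ := exists_eq_ciInf_of_finite (f := hM.isHermitian.eigenvalues)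
  calc (0 : 𝕜) < ((⨅ j, hM.isHermitian.eigenvalues j : ℝ) : 𝕜) := by
        rw [← hj, RCLike.ofReal_pos]; exact hM.eigenvalues_pos j
    _ ≤ (X * M).trace := hM.isHermitian.iInf_eigenvalues_le_trace_mul hX htr

lemma IsHermitian.trace_vecMulVec_eigenvectorBasis_mul {M : Matrix ι ι 𝕜} (hM : M.IsHermitian)
    (j : ι) :
    (vecMulVec (hM.eigenvectorBasis j).ofLp (star (hM.eigenvectorBasis j).ofLp) * M).trace =
      hM.eigenvalues j := by
  rw [trace_vecMulVec_self_star_mul, hM.mulVec_eigenvectorBasis, dotProduct_smul, dotProduct_comm,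
    ← trace_vecMulVec, trace_vecMulVec_self_star_eq_one (hM.eigenvectorBasis.orthonormal.1 j),
    RCLike.real_smul_eq_coe_mul, mul_one]

end Trace

section Kraus

def krausMap (A : κ → Matrix ι ι 𝕜) (X : Matrix ι ι 𝕜) : Matrix ι ι 𝕜 :=
  ∑ i, A i * X * (A i)ᴴ

lemma krausMap_conjTranspose (A : κ → Matrix ι ι 𝕜) (X : Matrix ι ι 𝕜) :
    krausMap (fun i => (A i)ᴴ) X = ∑ i, (A i)ᴴ * X * A i := by
  simp only [krausMap, conjTranspose_conjTranspose]

lemma PosSemidef.krausMap {X : Matrix ι ι 𝕜} (hX : X.PosSemidef) (A : κ → Matrix ι ι 𝕜) :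
    (krausMap A X).PosSemidef :=
  posSemidef_sum _ fun i _ => hX.mul_mul_conjTranspose_same (A i)

lemma trace_krausMap_mul (A : κ → Matrix ι ι 𝕜) (X Y : Matrix ι ι 𝕜) :
    (krausMap A X * Y).trace = (X * krausMap (fun i => (A i)ᴴ) Y).trace := by
  simp only [krausMap, Finset.sum_mul, Finset.mul_sum, trace_sum, conjTranspose_conjTranspose]
  refine Finset.sum_congr rfl fun i _ => ?_
  simp only [Matrix.mul_assoc]
  rw [trace_mul_comm]
  simp only [Matrix.mul_assoc]

variable [DecidableEq ι]

lemma IsHermitian.exists_density_trace_mul_krausMap_eq {A : κ → Matrix ι ι 𝕜}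
    {X : Matrix ι ι 𝕜} (h : (krausMap A X).IsHermitian) (j : ι) :
    ∃ Y : Matrix ι ι 𝕜, Y.PosSemidef ∧ Y.trace = 1 ∧
      (X * krausMap (fun i => (A i)ᴴ) Y).trace = h.eigenvalues j := by
  refine ⟨_, posSemidef_vecMulVec_self_star _,
    trace_vecMulVec_self_star_eq_one (h.eigenvectorBasis.orthonormal.1 j), ?_⟩
  rw [← trace_krausMap_mul, trace_mul_comm, h.trace_vecMulVec_eigenvectorBasis_mul]

-- `aQ A` and `bQ A` are definitionally `sInf (krausMinEigenvalues A)` and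
-- `sSup (krausMaxEigenvalues A)`.
def krausMinEigenvalues (A : κ → Matrix ι ι 𝕜) : Set ℝ :=
  {r | ∃ X : Matrix ι ι 𝕜, X.PosSemidef ∧ X.trace = 1 ∧
    ∃ h : (krausMap A X).IsHermitian, r = ⨅ j, h.eigenvalues j}

def krausMaxEigenvalues (A : κ → Matrix ι ι 𝕜) : Set ℝ :=
  {r | ∃ X : Matrix ι ι 𝕜, X.PosSemidef ∧ X.trace = 1 ∧
    ∃ h : (krausMap A X).IsHermitian, r = ⨆ j, h.eigenvalues j}

lemma exists_mem_krausMinEigenvalues_conjTranspose_le (A : κ → Matrix ι ι 𝕜) :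
    ∀ r ∈ krausMinEigenvalues A, ∃ s ∈ krausMinEigenvalues (fun i => (A i)ᴴ), s ≤ r := by
  rintro _ ⟨X, hX, htr, h, rfl⟩
  have := nonempty_of_trace_eq_one htr
  obtain ⟨j, hj⟩ := exists_eq_ciInf_of_finite (f := h.eigenvalues)
  obtain ⟨Y, hY, hYtr, hXY⟩ := h.exists_density_trace_mul_krausMap_eq j
  have hQY := (hY.krausMap fun i => (A i)ᴴ).isHermitian
  refine ⟨_, ⟨Y, hY, hYtr, hQY, rfl⟩, ?_⟩
  rw [← hj, ← RCLike.ofReal_le_ofReal (K := 𝕜), ← hXY]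
  exact hQY.iInf_eigenvalues_le_trace_mul hX htr

lemma exists_mem_krausMaxEigenvalues_conjTranspose_ge (A : κ → Matrix ι ι 𝕜) :
    ∀ r ∈ krausMaxEigenvalues A, ∃ s ∈ krausMaxEigenvalues (fun i => (A i)ᴴ), r ≤ s := by
  rintro _ ⟨X, hX, htr, h, rfl⟩
  have := nonempty_of_trace_eq_one htr
  obtain ⟨j, hj⟩ := exists_eq_ciSup_of_finite (f := h.eigenvalues)
  obtain ⟨Y, hY, hYtr, hXY⟩ := h.exists_density_trace_mul_krausMap_eq j
  have hQY := (hY.krausMap fun i => (A i)ᴴ).isHermitian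
  refine ⟨_, ⟨Y, hY, hYtr, hQY, rfl⟩, ?_⟩
  rw [← hj, ← RCLike.ofReal_le_ofReal (K := 𝕜), ← hXY]
  exact hQY.trace_mul_le_iSup_eigenvalues hX htr

lemma posDef_krausMap_of_posDef_krausMap_conjTranspose {A : κ → Matrix ι ι 𝕜}
    (hA : ∀ Y : Matrix ι ι 𝕜, Y.PosSemidef → Y.trace = 1 →
      (krausMap (fun i => (A i)ᴴ) Y).PosDef)
    {X : Matrix ι ι 𝕜} (hX : X.PosSemidef) (htr : X.trace = 1) : (krausMap A X).PosDef := by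
  have h := (hX.krausMap A).isHermitian
  refine h.posDef_iff_eigenvalues_pos.mpr fun j => ?_
  obtain ⟨Y, hY, hYtr, hXY⟩ := h.exists_density_trace_mul_krausMap_eq j
  rw [← RCLike.ofReal_pos (K := 𝕜), ← hXY]
  exact (hA Y hY hYtr).trace_mul_pos hX htr

end Kraus

end Matrix

theorem stmt11 {n k : ℕ} (A : Fin k → Matrix (Fin n) (Fin n) ℂ) :
    aQ A = aQ (fun i => (A i)ᴴ) ∧ bQ A = bQ (fun i => (A i)ᴴ) ∧
    ((∀ X : Matrix (Fin n) (Fin n) ℂ, X.PosSemidef → X.trace = 1 →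
        (∑ i, A i * X * (A i)ᴴ).PosDef) ↔
      (∀ X : Matrix (Fin n) (Fin n) ℂ, X.PosSemidef → X.trace = 1 →
        (∑ i, (A i)ᴴ * X * A i).PosDef)) := by
  have hA : (fun i => (A i)ᴴᴴ) = A := funext fun i => conjTranspose_conjTranspose (A i)
  have hmin := exists_mem_krausMinEigenvalues_conjTranspose_le fun i => (A i)ᴴ
  have hmax := exists_mem_krausMaxEigenvalues_conjTranspose_ge fun i => (A i)ᴴ
  rw [hA] at hmin hmax
  refine ⟨csInf_eq_csInf_of_forall_exists_le
      (exists_mem_krausMinEigenvalues_conjTranspose_le A) hmin,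
    csSup_eq_csSup_of_forall_exists_le
      (exists_mem_krausMaxEigenvalues_conjTranspose_ge A) hmax, ?_⟩
  simp only [← krausMap_conjTranspose]
  exact ⟨fun h _ => posDef_krausMap_of_posDef_krausMap_conjTranspose (by rwa [hA]),
    fun h _ => posDef_krausMap_of_posDef_krausMap_conjTranspose h⟩
end

section
/- Let Q be a completely positive map with a(Q) > 0, where a(Q)·I ⪯ Q(X) ⪯ b(Q)·I for all density matrices X. Then for any two density matrices X, Y: (a(Q)/b(Q))·Q(Y) ⪯ Q(X) ⪯ (b(Q)/a(Q))·Q(Y), and hence the Hilbert-metric diameter of the image Q(H_{n,+,1}) is at most 2·log(b(Q)/a(Q)). -/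
open Matrix
open scoped ComplexOrder

/-- For positive definite `X`, `Y`, this is `λ₁(X Y⁻¹)`, the largest eigenvalue of
`Y^{-1/2} X Y^{-1/2}`, characterized as the least `t` with `X ⪯ t Y`. -/
noncomputable def lamMax {n : ℕ} (X Y : Matrix (Fin n) (Fin n) ℂ) : ℝ :=
  sInf {t : ℝ | (t • Y - X).PosSemidef}

/-- For positive definite `X`, `Y`, this is `λ_n(X Y⁻¹)`, the smallest eigenvalue of
`Y^{-1/2} X Y^{-1/2}`, characterized as the greatest `t` with `t Y ⪯ X`. -/
noncomputable def lamMin {n : ℕ} (X Y : Matrix (Fin n) (Fin n) ℂ) : ℝ :=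
  sSup {t : ℝ | (X - t • Y).PosSemidef}

/-- The Hilbert projective metric on positive definite Hermitian matrices. -/
noncomputable def hilbertDist {n : ℕ} (X Y : Matrix (Fin n) (Fin n) ℂ) : ℝ :=
  Real.log (lamMax X Y) - Real.log (lamMin X Y)

/-!
If `a • 1 ⪯ Q X ⪯ b • 1` for all states, then `(a / b) • Q Y ⪯ (a / b) • (b • 1) = a • 1 ⪯ Q X`,
and symmetrically `Q X ⪯ b • 1 = (b / a) • (a • 1) ⪯ (b / a) • Q Y`. These two comparisons put
`a / b` into the set defining `lamMin` and `b / a` into the set defining `lamMax`. Taking traces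
in any comparison `X ⪯ t • Y` or `t • Y ⪯ X` bounds `t` by `tr X / tr Y`, which makes both sets
bounded and `lamMax` positive, so the logarithms compare as expected.
-/

open scoped MatrixOrder

namespace Matrix

section LoewnerOrder

variable {ι 𝕜 : Type*} [RCLike 𝕜]

lemma loewner_smul_le_smul {r : ℝ} (hr : 0 ≤ r) {A B : Matrix ι ι 𝕜} (h : A ≤ B) :
    r • A ≤ r • B := by
  rw [le_iff, ← smul_sub]
  exact (le_iff.mp h).smul hr

variable [DecidableEq ι]

lemma smul_le_of_smul_one_le_of_le_smul_one {c d : ℝ} (hc : 0 ≤ c) (hd : 0 < d)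
    {P R : Matrix ι ι 𝕜} (hP : c • (1 : Matrix ι ι 𝕜) ≤ P) (hR : R ≤ d • 1) :
    (c / d) • R ≤ P :=
  calc (c / d) • R ≤ (c / d) • d • (1 : Matrix ι ι 𝕜) := loewner_smul_le_smul (by positivity) hR
    _ = c • 1 := by rw [smul_smul, div_mul_cancel₀ c hd.ne']
    _ ≤ P := hP

lemma le_smul_of_le_smul_one_of_smul_one_le {c d : ℝ} (hc : 0 < c) (hd : 0 ≤ d)
    {P R : Matrix ι ι 𝕜} (hP : P ≤ d • 1) (hR : c • (1 : Matrix ι ι 𝕜) ≤ R) :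
    P ≤ (d / c) • R :=
  calc P ≤ d • 1 := hP
    _ = (d / c) • c • (1 : Matrix ι ι 𝕜) := by rw [smul_smul, div_mul_cancel₀ d hc.ne']
    _ ≤ (d / c) • R := loewner_smul_le_smul (by positivity) hR

end LoewnerOrder

section Trace

variable {ι : Type*} [Fintype ι]

lemma trace_re_pos_of_smul_one_le [DecidableEq ι] [Nonempty ι] {c : ℝ} (hc : 0 < c)
    {P : Matrix ι ι ℂ} (h : c • (1 : Matrix ι ι ℂ) ≤ P) : 0 < P.trace.re := by
  have hc1 : (c • (1 : Matrix ι ι ℂ)).PosDef := PosDef.one.smul hc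
  have hP : P.PosDef := by simpa using hc1.add_posSemidef (le_iff.mp h)
  exact (Complex.pos_iff.mp hP.trace_pos).1

variable {X Y : Matrix ι ι ℂ} {t : ℝ}

lemma le_trace_div_trace_of_posSemidef_sub_smul (hY : 0 < Y.trace.re)
    (h : (X - t • Y).PosSemidef) : t ≤ X.trace.re / Y.trace.re := by
  have htr := (Complex.le_def.mp h.trace_nonneg).1
  simp only [trace_sub, trace_smul, Complex.sub_re, Complex.real_smul, Complex.mul_re,
    Complex.ofReal_re, Complex.ofReal_im, zero_mul, sub_zero, Complex.zero_re] at htr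
  rw [le_div_iff₀ hY]
  linarith

lemma trace_div_trace_le_of_posSemidef_smul_sub (hY : 0 < Y.trace.re)
    (h : (t • Y - X).PosSemidef) : X.trace.re / Y.trace.re ≤ t := by
  have htr := (Complex.le_def.mp h.trace_nonneg).1
  simp only [trace_sub, trace_smul, Complex.sub_re, Complex.real_smul, Complex.mul_re,
    Complex.ofReal_re, Complex.ofReal_im, zero_mul, sub_zero, Complex.zero_re] at htr
  rw [div_le_iff₀ hY]
  linarith

end Trace

end Matrix

section HilbertMetric

variable {n : ℕ} {X Y : Matrix (Fin n) (Fin n) ℂ} {s t : ℝ}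

lemma lamMax_le (hY : 0 < Y.trace.re) (h : (t • Y - X).PosSemidef) : lamMax X Y ≤ t :=
  csInf_le ⟨_, fun _ hs => trace_div_trace_le_of_posSemidef_smul_sub hY hs⟩ h

lemma trace_div_trace_le_lamMax (hY : 0 < Y.trace.re) (h : (t • Y - X).PosSemidef) :
    X.trace.re / Y.trace.re ≤ lamMax X Y :=
  le_csInf ⟨t, h⟩ fun _ hs => trace_div_trace_le_of_posSemidef_smul_sub hY hs

lemma le_lamMin (hY : 0 < Y.trace.re) (h : (X - t • Y).PosSemidef) : t ≤ lamMin X Y :=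
  le_csSup ⟨_, fun _ hs => le_trace_div_trace_of_posSemidef_sub_smul hY hs⟩ h

lemma hilbertDist_le (hX : 0 < X.trace.re) (hY : 0 < Y.trace.re) (hs : 0 < s)
    (hlow : (X - s • Y).PosSemidef) (hup : (t • Y - X).PosSemidef) :
    hilbertDist X Y ≤ Real.log t - Real.log s := by
  have hmax : Real.log (lamMax X Y) ≤ Real.log t :=
    Real.log_le_log ((div_pos hX hY).trans_le (trace_div_trace_le_lamMax hY hup))
      (lamMax_le hY hup)
  have hmin : Real.log s ≤ Real.log (lamMin X Y) := Real.log_le_log hs (le_lamMin hY hlow)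
  unfold hilbertDist
  linarith

end HilbertMetric

theorem stmt17 {n k : ℕ} (A : Fin k → Matrix (Fin n) (Fin n) ℂ)
    (a b : ℝ) (ha : 0 < a) (hab : a ≤ b)
    (hbound : ∀ X : Matrix (Fin n) (Fin n) ℂ, X.PosSemidef → X.trace = 1 →
      ((∑ i, A i * X * (A i)ᴴ) - a • (1 : Matrix (Fin n) (Fin n) ℂ)).PosSemidef ∧
      (b • (1 : Matrix (Fin n) (Fin n) ℂ) - ∑ i, A i * X * (A i)ᴴ).PosSemidef)
    (X Y : Matrix (Fin n) (Fin n) ℂ)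
    (hX : X.PosSemidef) (hX1 : X.trace = 1)
    (hY : Y.PosSemidef) (hY1 : Y.trace = 1) :
    ((∑ i, A i * X * (A i)ᴴ) - (a / b) • ∑ i, A i * Y * (A i)ᴴ).PosSemidef ∧
    ((b / a) • (∑ i, A i * Y * (A i)ᴴ) - ∑ i, A i * X * (A i)ᴴ).PosSemidef ∧
    hilbertDist (∑ i, A i * X * (A i)ᴴ) (∑ i, A i * Y * (A i)ᴴ) ≤ 2 * Real.log (b / a) := by
  have hb : 0 < b := ha.trans_le hab
  have : Nonempty (Fin n) := by
    by_contra hempty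
    rw [not_nonempty_iff] at hempty
    simp [Matrix.trace] at hX1
  obtain ⟨hXlow, hXup⟩ := hbound X hX hX1
  obtain ⟨hYlow, hYup⟩ := hbound Y hY hY1
  have hlow := smul_le_of_smul_one_le_of_le_smul_one ha.le hb hXlow hYup
  have hup := le_smul_of_le_smul_one_of_smul_one_le ha hb.le hXup hYlow
  refine ⟨hlow, hup, ?_⟩
  calc _ ≤ Real.log (b / a) - Real.log (a / b) :=
        hilbertDist_le (trace_re_pos_of_smul_one_le ha hXlow)
          (trace_re_pos_of_smul_one_le ha hYlow) (by positivity) hlow hup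
    _ = 2 * Real.log (b / a) := by rw [← inv_div b a, Real.log_inv]; ring
end
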